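/- In any execution of the greedy bottom-up triplet-forming procedure on a tree T rooted at a degree-1 node, the triplets graph (triplets as vertices, edges between triplets sharing a node of T) is connected. -/

import Mathlib

/-!
Every triplet formed so far is joined, in the triplets graph, to a triplet containing an orange
node: a step turns green only nodes of the triplet it creates, and that triplet contains the node
it turns orange. When the procedure stops, orange nodes have depth at most one, and a triplet
containing the root also contains the root's unique child `c` (it was formed with the root as a
grandparent). So every triplet is joined to one containing `c`, and all those meet at `c`.
-/

open scoped Classical

namespace ArtGallery

noncomputable section

/-- Node colors used by the greedy bottom-up triplet-forming procedure. -/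
inductive TColor
  | red | orange | green
deriving DecidableEq

/-- A finite rooted tree of maximum degree 3 whose root has degree 1, together with its
parent and depth (level) functions. -/
structure RootedTree (V : Type) [Fintype V] where
  G : SimpleGraph V
  isTree : G.IsTree
  root : V
  parent : V → V
  parent_root : parent root = root
  parent_adj : ∀ v, v ≠ root → G.Adj v (parent v)
  depth : V → ℕ
  depth_root : depth root = 0
  depth_parent : ∀ v, v ≠ root → depth (parent v) + 1 = depth v
  maxDeg : ∀ v, (G.neighborSet v).ncard ≤ 3
  root_deg : (G.neighborSet root).ncard = 1

/-- A state of the procedure: a coloring of the nodes and the set of triplets formed so far. -/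
structure TState (V : Type) where
  color : V → TColor
  trips : Set (Set V)

variable {V : Type} [Fintype V]

/-- The initial state: all leaves orange, all other nodes red, no triplets formed. -/
def initState (T : RootedTree V) : TState V :=
  ⟨fun v => if v ≠ T.root ∧ (T.G.neighborSet v).ncard = 1 then TColor.orange else TColor.red, ∅⟩

/-- One step of the greedy bottom-up triplet-forming procedure.  Orange nodes are processed
from the deepest level upwards (down to level 2): either two orange siblings are merged with
their parent (which becomes orange, the siblings green), or a lone orange node is merged with
its parent and grandparent (the grandparent becomes orange, the other two green). -/
inductive TStep (T : RootedTree V) : TState V → TState V → Prop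
  | pair (s : TState V) (v v' : V)
      (hv : s.color v = TColor.orange) (hv' : s.color v' = TColor.orange)
      (hne : v ≠ v') (hp : T.parent v = T.parent v')
      (hdeep : ∀ w, s.color w = TColor.orange → T.depth w ≤ T.depth v)
      (hd : 2 ≤ T.depth v) :
      TStep T s ⟨fun w => if w = v ∨ w = v' then TColor.green
                  else if w = T.parent v then TColor.orange else s.color w,
        insert {v, v', T.parent v} s.trips⟩
  | chain (s : TState V) (v : V)
      (hv : s.color v = TColor.orange)
      (hsolo : ∀ v', v' ≠ v → T.parent v' = T.parent v → s.color v' ≠ TColor.orange)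
      (hdeep : ∀ w, s.color w = TColor.orange → T.depth w ≤ T.depth v)
      (hd : 2 ≤ T.depth v) :
      TStep T s ⟨fun w => if w = v ∨ w = T.parent v then TColor.green
                  else if w = T.parent (T.parent v) then TColor.orange else s.color w,
        insert {v, T.parent v, T.parent (T.parent v)} s.trips⟩

/-- The procedure has finished its main loop: no orange node at level `≥ 2` remains. -/
def Terminal (T : RootedTree V) (s : TState V) : Prop :=
  ∀ v, s.color v = TColor.orange → T.depth v < 2

/-- The final family of triplets: if the root is already covered, the triplets formed so far;
otherwise one additional triplet consisting of the root, its child and a grandchild. -/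
def FinalTrips (T : RootedTree V) (s : TState V) (F : Set (Set V)) : Prop :=
  ((∃ t ∈ s.trips, T.root ∈ t) ∧ F = s.trips) ∨
  ((∀ t ∈ s.trips, T.root ∉ t) ∧
    ∃ c g : V, c ≠ T.root ∧ T.parent c = T.root ∧ g ≠ c ∧ T.parent g = c ∧
      F = insert {T.root, c, g} s.trips)

section IntersectionGraph

variable {α : Type*}

abbrev intersectionGraph (F : Set (Set α)) : SimpleGraph F :=
  SimpleGraph.fromRel fun a b => ((a : Set α) ∩ b).Nonempty

theorem intersectionGraph_reachable_of_inter_nonempty {F : Set (Set α)} {a b : F}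
    (h : ((a : Set α) ∩ b).Nonempty) : (intersectionGraph F).Reachable a b := by
  by_cases hab : a = b
  · exact hab ▸ SimpleGraph.Reachable.refl a
  · exact SimpleGraph.Adj.reachable ⟨hab, Or.inl h⟩

def intersectionGraphInclusion {F F' : Set (Set α)} (h : F ⊆ F') :
    intersectionGraph F →g intersectionGraph F' where
  toFun := Set.inclusion h
  map_rel' := fun ⟨hne, hab⟩ => ⟨(Set.inclusion_injective h).ne hne, hab⟩

def Anchored (F : Set (Set α)) (S : Set α) : Prop :=
  ∀ t : F, ∃ t₀ : F, ((t₀ : Set α) ∩ S).Nonempty ∧ (intersectionGraph F).Reachable t t₀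

theorem Anchored.insert {F : Set (Set α)} {S S' t : Set α} (h : Anchored F S)
    (hleave : S \ S' ⊆ t) (ht : (t ∩ S').Nonempty) : Anchored (Insert.insert t F) S' := by
  have hsub := Set.subset_insert t F
  let tNew : ↥(Insert.insert t F) := ⟨t, Set.mem_insert t F⟩
  rintro ⟨u, hu⟩
  rcases Set.mem_insert_iff.mp hu with rfl | hu
  · exact ⟨tNew, ht, .refl _⟩
  obtain ⟨t₀, ⟨w, hwt₀, hwS⟩, hreach⟩ := h ⟨u, hu⟩
  have hreach' := hreach.map (intersectionGraphInclusion hsub)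
  by_cases hwS' : w ∈ S'
  · exact ⟨Set.inclusion hsub t₀, ⟨w, hwt₀, hwS'⟩, hreach'⟩
  · refine ⟨tNew, ht, hreach'.trans (intersectionGraph_reachable_of_inter_nonempty ?_)⟩
    exact ⟨w, hwt₀, hleave ⟨hwS, hwS'⟩⟩

theorem Anchored.mono_right {F : Set (Set α)} {S S' : Set α} (h : Anchored F S)
    (hSS' : ∀ t ∈ F, (t ∩ S).Nonempty → (t ∩ S').Nonempty) : Anchored F S' := fun t =>
  let ⟨t₀, hmeet, hreach⟩ := h t
  ⟨t₀, hSS' t₀ t₀.2 hmeet, hreach⟩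

theorem Anchored.connected {F : Set (Set α)} {S : Set α} (h : Anchored F S) (hF : F.Nonempty)
    (hS : S.Subsingleton) : (intersectionGraph F).Connected := by
  obtain ⟨t, ht⟩ := hF
  obtain ⟨t₀, ⟨x, hxt₀, hxS⟩, -⟩ := h ⟨t, ht⟩
  refine (SimpleGraph.connected_iff_exists_forall_reachable _).mpr ⟨t₀, fun u => ?_⟩
  obtain ⟨u₀, ⟨y, hyu₀, hyS⟩, hu⟩ := h u
  exact (intersectionGraph_reachable_of_inter_nonempty ⟨x, hxt₀, hS hxS hyS ▸ hyu₀⟩).trans hu.symm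

end IntersectionGraph

namespace RootedTree

variable (T : RootedTree V)

theorem eq_root_of_depth_eq_zero {u : V} (h : T.depth u = 0) : u = T.root := by
  by_contra hu
  have := T.depth_parent u hu
  omega

theorem ne_root_of_depth_pos {u : V} (h : 0 < T.depth u) : u ≠ T.root := by
  rintro rfl
  simp [T.depth_root] at h

theorem depth_eq_of_parent_eq {u u' : V} (hp : T.parent u = T.parent u')
    (hu : T.parent u ≠ T.root) : T.depth u = T.depth u' := by
  have hur : u ≠ T.root := fun h => hu (h ▸ T.parent_root)
  have hu'r : u' ≠ T.root := fun h => hu (hp ▸ h ▸ T.parent_root)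
  have hdu := T.depth_parent u hur
  have hdu' := T.depth_parent u' hu'r
  rw [hp] at hdu
  omega

theorem mem_neighborSet_root_of_depth_eq_one {u : V} (hu : T.depth u = 1) :
    u ∈ T.G.neighborSet T.root := by
  have hur := T.ne_root_of_depth_pos (by omega : 0 < T.depth u)
  have hpu : T.parent u = T.root :=
    T.eq_root_of_depth_eq_zero (by have := T.depth_parent u hur; omega)
  exact hpu ▸ (T.parent_adj u hur).symm

theorem subsingleton_depth_eq_one : {u | T.depth u = 1}.Subsingleton :=
  (Set.ncard_le_one_iff_subsingleton.mp T.root_deg.le).anti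
    fun _ => T.mem_neighborSet_root_of_depth_eq_one

end RootedTree

variable {T : RootedTree V} {s s' : TState V}

theorem TStep.anchored_orange (h : TStep T s s')
    (hs : Anchored s.trips {w | s.color w = .orange}) :
    Anchored s'.trips {w | s'.color w = .orange} := by
  cases h with
  | pair v v' _ _ _ hp _ hd =>
    have hdv := T.depth_parent v (T.ne_root_of_depth_pos (by omega))
    have hdv' := T.depth_eq_of_parent_eq hp (T.ne_root_of_depth_pos (by omega))
    have hpv : T.parent v ≠ v := ne_of_apply_ne T.depth (by omega)
    have hpv' : T.parent v ≠ v' := ne_of_apply_ne T.depth (by omega)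
    refine hs.insert (t := {v, v', T.parent v}) ?_ ⟨T.parent v, ?_⟩
    · rintro w ⟨hw, hw'⟩
      by_contra hwt
      simp_all
    · simp [hpv, hpv']
  | chain v _ _ _ hd =>
    have hdv := T.depth_parent v (T.ne_root_of_depth_pos (by omega))
    have hdpv := T.depth_parent (T.parent v) (T.ne_root_of_depth_pos (by omega))
    have hppv : T.parent (T.parent v) ≠ T.parent v := ne_of_apply_ne T.depth (by omega)
    have hppv' : T.parent (T.parent v) ≠ v := ne_of_apply_ne T.depth (by omega)
    refine hs.insert (t := {v, T.parent v, T.parent (T.parent v)}) ?_ ⟨T.parent (T.parent v), ?_⟩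
    · rintro w ⟨hw, hw'⟩
      by_contra hwt
      simp_all
    · simp [hppv, hppv']

theorem anchored_orange_of_exec (hexec : Relation.ReflTransGen (TStep T) (initState T) s) :
    Anchored s.trips {w | s.color w = .orange} := by
  induction hexec with
  | refl => exact fun t => absurd t.2 (Set.notMem_empty _)
  | tail _ hstep ih => exact hstep.anchored_orange ih

theorem exists_depth_eq_one_of_root_mem (hexec : Relation.ReflTransGen (TStep T) (initState T) s)
    {t : Set V} (ht : t ∈ s.trips) (hroot : T.root ∈ t) : ∃ u ∈ t, T.depth u = 1 := by
  induction hexec with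
  | refl => exact absurd ht (Set.notMem_empty _)
  | tail _ hstep ih =>
    cases hstep with
    | pair v v' _ _ _ hp _ hd =>
      rcases Set.mem_insert_iff.mp ht with rfl | ht
      · have hdv := T.depth_parent v (T.ne_root_of_depth_pos (by omega))
        have hdv' := T.depth_eq_of_parent_eq hp (T.ne_root_of_depth_pos (by omega))
        simp only [Set.mem_insert_iff, Set.mem_singleton_iff] at hroot
        rcases hroot with h | h | h <;> have := h ▸ T.depth_root <;> omega
      · exact ih ht
    | chain v _ _ _ hd =>
      rcases Set.mem_insert_iff.mp ht with rfl | ht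
      · have hdv := T.depth_parent v (T.ne_root_of_depth_pos (by omega))
        have hdpv := T.depth_parent (T.parent v) (T.ne_root_of_depth_pos (by omega))
        refine ⟨T.parent v, by simp, ?_⟩
        simp only [Set.mem_insert_iff, Set.mem_singleton_iff] at hroot
        rcases hroot with h | h | h <;> have := h ▸ T.depth_root <;> omega
      · exact ih ht

theorem anchored_depth_eq_one_of_terminal
    (hexec : Relation.ReflTransGen (TStep T) (initState T) s) (hterm : Terminal T s) :
    Anchored s.trips {u | T.depth u = 1} := by
  refine (anchored_orange_of_exec hexec).mono_right fun t ht ⟨w, hwt, hw⟩ => ?_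
  rcases (by have := hterm w hw; omega : T.depth w = 0 ∨ T.depth w = 1) with h0 | h1
  · exact exists_depth_eq_one_of_root_mem hexec ht (T.eq_root_of_depth_eq_zero h0 ▸ hwt)
  · exact ⟨w, hwt, h1⟩

theorem greedy_triplets_graph_connected_general (T : RootedTree V)
    (s : TState V) (hexec : Relation.ReflTransGen (TStep T) (initState T) s)
    (hterm : Terminal T s) (F : Set (Set V)) (hF : FinalTrips T s F) :
    (SimpleGraph.fromRel (fun a b : ↥F => ((a : Set V) ∩ (b : Set V)).Nonempty)).Connected := by
  have hanchored := anchored_depth_eq_one_of_terminal hexec hterm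
  rcases hF with ⟨⟨t, ht, -⟩, rfl⟩ | ⟨-, c, g, hc, hpc, -, -, rfl⟩
  · exact hanchored.connected ⟨t, ht⟩ T.subsingleton_depth_eq_one
  · have hc : T.depth c = 1 := by
      have := T.depth_parent c hc
      rw [hpc, T.depth_root] at this
      omega
    have hanchored' : Anchored (insert {T.root, c, g} s.trips) {u | T.depth u = 1} :=
      hanchored.insert (by simp) ⟨c, by simp, hc⟩
    exact hanchored'.connected ⟨_, Set.mem_insert _ _⟩ T.subsingleton_depth_eq_one

/-- In any execution of the greedy bottom-up triplet-forming procedure on a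
rooted tree with degree-1 root, the triplets graph (triplets as vertices, with an edge between
two triplets iff they share at least one tree node) is connected. -/
theorem greedy_triplets_graph_connected (T : RootedTree V) (hdepth : ∃ v, 2 ≤ T.depth v)
    (s : TState V) (hexec : Relation.ReflTransGen (TStep T) (initState T) s)
    (hterm : Terminal T s) (F : Set (Set V)) (hF : FinalTrips T s F) :
    (SimpleGraph.fromRel (fun a b : ↥F => ((a : Set V) ∩ (b : Set V)).Nonempty)).Connected :=
  greedy_triplets_graph_connected_general T s hexec hterm F hF

end
end ArtGallery
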